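/- Let M be a deterministic labelled MDP with n_q states and semantics M, and let C^obs be the set of observable test sequences of length at most n_q² + 1. For any deterministic labelled MDP M' with at most n_q states and semantics M', M and M' are output-distribution equivalent if and only if M(c) = M'(c) for all c in C^obs. -/

import Mathlib

open scoped ENNReal Classical
open MeasureTheory

/-- Traces: alternating output-input sequences starting and ending with an output. -/
abbrev Trace (I O : Type*) := O × List (I × O)
/-- Test sequences: alternating output-input sequences starting with an output, ending with an input. -/
abbrev TS (I O : Type*) := List (O × I)
/-- Continuation sequences: start and end with an input. -/
abbrev CS (I O : Type*) := I × List (O × I)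

/-- Deterministic labelled Markov decision process. -/
structure DetMDP (Q I O : Type*) where
  q0 : Q
  trans : Q → I → Q → ℝ≥0∞
  lab : Q → O
  sum_one : ∀ q i, ∑' q', trans q i q' = 1
  det : ∀ q i q' q'', 0 < trans q i q' → 0 < trans q i q'' → lab q' = lab q'' → q' = q''

namespace DetMDP

variable {Q I O : Type*}

/-- Δ: unique successor with positive probability and matching label, if any. -/
noncomputable def step (M : DetMDP Q I O) (q : Q) (i : I) (o : O) : Option Q :=
  if h : ∃ q', 0 < M.trans q i q' ∧ M.lab q' = o then some h.choose else none

noncomputable def run (M : DetMDP Q I O) : Option Q → List (I × O) → Option Q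
  | oq, [] => oq
  | some q, (i, o) :: rest => M.run (M.step q i o) rest
  | none, _ :: _ => none

/-- δ*: the state reached by a trace, `none` if the trace is not observable. -/
noncomputable def dstar (M : DetMDP Q I O) (t : Trace I O) : Option Q :=
  if M.lab M.q0 = t.1 then M.run (some M.q0) t.2 else none

/-- Distribution over outputs after executing input `i` in state `q`. -/
noncomputable def outDist (M : DetMDP Q I O) (q : Q) (i : I) : O → ℝ≥0∞ :=
  fun o => ∑' q', if M.lab q' = o then M.trans q i q' else 0

end DetMDP

/-- Split a nonempty test sequence into its trace part and final input. -/
def tsSplit {I O : Type*} : O → I → TS I O → Trace I O × I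
  | o, i, [] => ((o, []), i)
  | o, i, (o', i') :: rest =>
    let p := tsSplit o' i' rest
    ((o, (i, p.1.1) :: p.1.2), p.2)

namespace DetMDP

variable {Q I O : Type*}

/-- The semantics of a deterministic labelled MDP: a partial map from test
sequences to output distributions. -/
noncomputable def sem (M : DetMDP Q I O) : TS I O → Option (O → ℝ≥0∞)
  | [] => some (fun o => if M.lab M.q0 = o then 1 else 0)
  | (o, i) :: rest =>
    let p := tsSplit o i rest
    match M.dstar p.1 with
    | none => none
    | some q => some (M.outDist q p.2)

/-- Probability of observing the output part of a trace suffix from a state. -/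
noncomputable def traceProb (M : DetMDP Q I O) : Option Q → List (I × O) → ℝ≥0∞
  | none, _ => 0
  | some _, [] => 1
  | some q, (i, o) :: rest => M.outDist q i o * M.traceProb (M.step q i o) rest

end DetMDP

def traceInputAux {I O : Type*} : O → List (I × O) → I → TS I O
  | o, [], i => [(o, i)]
  | o, (i', o') :: rest, i => (o, i') :: traceInputAux o' rest i

/-- The test sequence `t · i`. -/
def traceInput {I O : Type*} (t : Trace I O) (i : I) : TS I O := traceInputAux t.1 t.2 i

/-- The test sequence `t · e` for a continuation sequence `e`. -/
def traceCS {I O : Type*} (t : Trace I O) (e : CS I O) : TS I O := traceInput t e.1 ++ e.2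

/-- The trace `t · i · o`. -/
def extT {I O : Type*} (t : Trace I O) (i : I) (o : O) : Trace I O := (t.1, t.2 ++ [(i, o)])

/-- The last output of a trace. -/
def lastOut {I O : Type*} (t : Trace I O) : O := ((t.2.getLast?).map Prod.snd).getD t.1

/-- Trace prefix relation. -/
def tracePrefix {I O : Type*} (t t' : Trace I O) : Prop := t.1 = t'.1 ∧ t.2 <+: t'.2

/-- `f(s)(o)` read off a partial semantics function (0 when undefined). -/
def probOf {I O : Type*} (f : TS I O → Option (O → ℝ≥0∞)) (s : TS I O) (o : O) : ℝ≥0∞ :=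
  ((f s).getD fun _ => 0) o

/-- M-equivalence of traces. -/
def MEq {I O : Type*} (f : TS I O → Option (O → ℝ≥0∞)) (t1 t2 : Trace I O) : Prop :=
  lastOut t1 = lastOut t2 ∧ ∀ e : CS I O, f (traceCS t1 e) = f (traceCS t2 e)

/-- Row of a trace in an observation table with column labels `E`. -/
noncomputable def rowOn {I O : Type*} (E : Set (CS I O)) (f : TS I O → Option (O → ℝ≥0∞)) (t : Trace I O) :
    CS I O → Option (O → ℝ≥0∞) :=
  fun e => if e ∈ E then f (traceCS t e) else none

/-- Row equivalence `eqRow_E`. -/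
def eqRow {I O : Type*} (E : Set (CS I O)) (f : TS I O → Option (O → ℝ≥0∞))
    (t1 t2 : Trace I O) : Prop :=
  lastOut t1 = lastOut t2 ∧ rowOn E f t1 = rowOn E f t2

/-- Membership in `Lt(S)`: observable one-step extensions of short traces. -/
def inLt {I O : Type*} (f : TS I O → Option (O → ℝ≥0∞)) (S : Set (Trace I O))
    (t : Trace I O) : Prop :=
  ∃ s ∈ S, ∃ i o, t = extT s i o ∧ 0 < probOf f (traceInput s i) o

/-- Closedness of an observation table. -/
def ClosedTable {I O : Type*} (E : Set (CS I O)) (f : TS I O → Option (O → ℝ≥0∞))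
    (S : Set (Trace I O)) : Prop :=
  ∀ l, inLt f S l → ∃ s ∈ S, eqRow E f l s

/-- Consistency of an observation table. -/
def ConsistentTable {I O : Type*} (E : Set (CS I O)) (f : TS I O → Option (O → ℝ≥0∞))
    (S : Set (Trace I O)) : Prop :=
  ∀ s1 ∈ S, ∀ s2 ∈ S, eqRow E f s1 s2 → ∀ i o,
    (probOf f (traceInput s1 i) o = 0 ∧ probOf f (traceInput s2 i) o = 0) ∨
      eqRow E f (extT s1 i o) (extT s2 i o)

/-- The hypothesis state `⟨last(s), row(s)⟩` associated with a trace. -/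
noncomputable def stateOf {I O : Type*} (E : Set (CS I O)) (f : TS I O → Option (O → ℝ≥0∞))
    (t : Trace I O) : O × (CS I O → Option (O → ℝ≥0∞)) :=
  (lastOut t, rowOn E f t)

/-! If the two machines agree on the short observable tests, then every pair of states reached
jointly from the initial states has equal output distributions: by pigeonhole on `Q × Q'`, which
has at most `n_q²` elements, such a pair is already reached jointly along a trace of length below
`n_q²`, and that trace followed by one input is a short observable test. Since `Δ` is undefined
exactly where the output probability vanishes, equal output distributions also make the two runs
fail at the same step, so the semantics agree on every test sequence. -/

lemma tsSplit_traceInputAux {I O : Type*} : ∀ (l : List (I × O)) (o : O) (i : I),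
    ∃ i₀ rest, traceInputAux o l i = (o, i₀) :: rest ∧ tsSplit o i₀ rest = ((o, l), i)
  | [], _, i => ⟨i, [], rfl, rfl⟩
  | (i', o') :: rest, o, i => by
      obtain ⟨i₀, rest₀, h₁, h₂⟩ := tsSplit_traceInputAux rest o' i
      exact ⟨i', (o', i₀) :: rest₀, by simp [traceInputAux, h₁], by simp [tsSplit, h₂]⟩

lemma length_traceInputAux {I O : Type*} : ∀ (l : List (I × O)) (o : O) (i : I),
    (traceInputAux o l i).length = l.length + 1
  | [], _, _ => rfl
  | (_, o') :: rest, _, i => by simp [traceInputAux, length_traceInputAux rest o' i]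

lemma length_traceInput {I O : Type*} (t : Trace I O) (i : I) :
    (traceInput t i).length = t.2.length + 1 :=
  length_traceInputAux t.2 t.1 i

namespace DetMDP

variable {Q Q' I O : Type*}

@[simp]
lemma run_none (M : DetMDP Q I O) (l : List (I × O)) : M.run none l = none := by
  cases l <;> rfl

lemma run_append (M : DetMDP Q I O) (s : Option Q) (l₁ l₂ : List (I × O)) :
    M.run s (l₁ ++ l₂) = M.run (M.run s l₁) l₂ := by
  induction l₁ generalizing s with
  | nil => cases s <;> rfl
  | cons x l₁ ih =>
    cases s with
    | none => simp
    | some q => exact ih _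

lemma run_take_ne_none (M : DetMDP Q I O) {s : Option Q} {l : List (I × O)} {q : Q}
    (h : M.run s l = some q) (j : ℕ) : M.run s (l.take j) ≠ none := by
  intro hj
  rw [← List.take_append_drop j l, run_append, hj, run_none] at h
  cases h

lemma run_take_append_drop (M : DetMDP Q I O) (s : Option Q) (l : List (I × O)) {j k : ℕ}
    (h : M.run s (l.take j) = M.run s (l.take k)) :
    M.run s (l.take j ++ l.drop k) = M.run s l := by
  rw [run_append, h, ← run_append, List.take_append_drop]

lemma step_eq_none_iff (M : DetMDP Q I O) (q : Q) (i : I) (o : O) :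
    M.step q i o = none ↔ M.outDist q i o = 0 := by
  simp only [step, outDist, ENNReal.tsum_eq_zero, ite_eq_right_iff, dite_eq_right_iff,
    reduceCtorEq, imp_false, not_exists, not_and]
  exact forall_congr' fun q' => by rw [pos_iff_ne_zero]; tauto

lemma sem_cons (M : DetMDP Q I O) (o : O) (i : I) (rest : TS I O) :
    M.sem ((o, i) :: rest) =
      (M.dstar (tsSplit o i rest).1).map (M.outDist · (tsSplit o i rest).2) := by
  simp only [sem]
  cases M.dstar _ <;> rfl

lemma sem_traceInput (M : DetMDP Q I O) (t : Trace I O) (i : I) :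
    M.sem (traceInput t i) = (M.dstar t).map (M.outDist · i) := by
  obtain ⟨i₀, rest, h₁, h₂⟩ := tsSplit_traceInputAux t.2 t.1 i
  rw [traceInput, h₁, sem_cons, h₂]

lemma dstar_lab_q0 (M : DetMDP Q I O) (l : List (I × O)) :
    M.dstar (M.lab M.q0, l) = M.run (some M.q0) l :=
  if_pos rfl

lemma lab_q0_eq_of_sem_nil_eq {M : DetMDP Q I O} {M' : DetMDP Q' I O}
    (h : M.sem [] = M'.sem []) : M.lab M.q0 = M'.lab M'.q0 := by
  have := congrFun (Option.some_injective _ h) (M.lab M.q0)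
  by_contra hne
  simp [Ne.symm hne] at this

lemma exists_joint_loop [Fintype Q] [Fintype Q'] (M : DetMDP Q I O) (M' : DetMDP Q' I O)
    {s : Option Q} {s' : Option Q'} {l : List (I × O)} {q : Q} {q' : Q'}
    (h : M.run s l = some q) (h' : M'.run s' l = some q')
    (hl : Fintype.card Q * Fintype.card Q' ≤ l.length) :
    ∃ j k, j < k ∧ k ≤ l.length ∧ M.run s (l.take j) = M.run s (l.take k) ∧
      M'.run s' (l.take j) = M'.run s' (l.take k) := by
  let prefixStates (j : ℕ) : Option Q × Option Q' := (M.run s (l.take j), M'.run s' (l.take j))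
  have hmaps : ∀ j ∈ Finset.range (l.length + 1), prefixStates j ∈
      (Finset.univ : Finset (Q × Q')).image fun p => (some p.1, some p.2) := by
    intro j _
    obtain ⟨p, hp⟩ := Option.ne_none_iff_exists'.mp (M.run_take_ne_none h j)
    obtain ⟨p', hp'⟩ := Option.ne_none_iff_exists'.mp (M'.run_take_ne_none h' j)
    exact Finset.mem_image.mpr ⟨(p, p'), Finset.mem_univ _, by simp [prefixStates, hp, hp']⟩
  have hcard : ((Finset.univ : Finset (Q × Q')).image fun p => (some p.1, some p.2)).card <
      (Finset.range (l.length + 1)).card := by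
    grw [Finset.card_image_le]
    simp only [Finset.card_univ, Fintype.card_prod, Finset.card_range]
    omega
  obtain ⟨j, hj, k, hk, hne, hjk⟩ := Finset.exists_ne_map_eq_of_card_lt_of_maps_to hcard hmaps
  simp only [Finset.mem_range, prefixStates, Prod.ext_iff] at hj hk hjk
  rcases hne.lt_or_gt with hlt | hlt
  · exact ⟨j, k, hlt, by omega, hjk⟩
  · exact ⟨k, j, hlt, by omega, hjk.1.symm, hjk.2.symm⟩

theorem exists_run_eq_some_length_lt [Fintype Q] [Fintype Q'] (M : DetMDP Q I O)
    (M' : DetMDP Q' I O) {s : Option Q} {s' : Option Q'} {q : Q} {q' : Q'}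
    (l : List (I × O)) (h : M.run s l = some q) (h' : M'.run s' l = some q') :
    ∃ l' : List (I × O), l'.length < Fintype.card Q * Fintype.card Q' ∧
      M.run s l' = some q ∧ M'.run s' l' = some q' := by
  by_cases hl : l.length < Fintype.card Q * Fintype.card Q'
  · exact ⟨l, hl, h, h'⟩
  obtain ⟨j, k, hjk, hk, hloop, hloop'⟩ := exists_joint_loop M M' h h' (not_lt.mp hl)
  have : (l.take j ++ l.drop k).length < l.length := by simp; omega
  exact exists_run_eq_some_length_lt M M' (l.take j ++ l.drop k)
    (by rw [run_take_append_drop M s l hloop, h]) (by rw [run_take_append_drop M' s' l hloop', h'])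
termination_by l.length

lemma run_eq_none_iff_of_outDist_eq {M : DetMDP Q I O} {M' : DetMDP Q' I O} {q : Q} {q' : Q'}
    (H : ∀ l p p', M.run (some q) l = some p → M'.run (some q') l = some p' →
      M.outDist p = M'.outDist p')
    (l : List (I × O)) : M.run (some q) l = none ↔ M'.run (some q') l = none := by
  induction l generalizing q q' with
  | nil => simp [run]
  | cons x l ih =>
    obtain ⟨i, o⟩ := x
    have hstep : M.step q i o = none ↔ M'.step q' i o = none := by
      rw [step_eq_none_iff, step_eq_none_iff, H [] q q' rfl rfl]
    simp only [run]
    cases hr : M.step q i o with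
    | none => simp [hstep.mp hr]
    | some r =>
      obtain ⟨r', hr'⟩ := Option.ne_none_iff_exists'.mp (mt hstep.mpr (by simp [hr]))
      rw [hr']
      exact ih fun l p p' hp hp' => H ((i, o) :: l) p p' (by simpa [run, hr]) (by simpa [run, hr'])

lemma map_outDist_run_eq_of_outDist_eq {M : DetMDP Q I O} {M' : DetMDP Q' I O}
    {q : Q} {q' : Q'}
    (H : ∀ l p p', M.run (some q) l = some p → M'.run (some q') l = some p' →
      M.outDist p = M'.outDist p')
    (l : List (I × O)) :
    (M.run (some q) l).map M.outDist = (M'.run (some q') l).map M'.outDist := by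
  cases hp : M.run (some q) l with
  | none => simp [(run_eq_none_iff_of_outDist_eq H l).mp hp]
  | some p =>
    obtain ⟨p', hp'⟩ := Option.ne_none_iff_exists'.mp
      (mt (run_eq_none_iff_of_outDist_eq H l).mpr (by simp [hp]))
    simp [hp', H l p p' hp hp']

lemma sem_eq_of_run_map_outDist_eq {M : DetMDP Q I O} {M' : DetMDP Q' I O}
    (hlab : M.lab M.q0 = M'.lab M'.q0)
    (h : ∀ l, (M.run (some M.q0) l).map M.outDist = (M'.run (some M'.q0) l).map M'.outDist)
    (s : TS I O) : M.sem s = M'.sem s := by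
  rcases s with _ | ⟨⟨o, i⟩, rest⟩
  · simp [sem, hlab]
  rw [sem_cons, sem_cons]
  obtain ⟨⟨o₀, l⟩, i₀⟩ := tsSplit o i rest
  by_cases ho : M.lab M.q0 = o₀
  · subst ho
    rw [dstar_lab_q0, hlab, dstar_lab_q0]
    simpa [Option.map_map, Function.comp_def] using congrArg (Option.map (· i₀)) (h l)
  · simp [dstar, ho, ← hlab]

lemma outDist_eq_of_sem_eq_of_length_le {M : DetMDP Q I O} {M' : DetMDP Q' I O} {n : ℕ}
    (h : ∀ c : TS I O, c.length ≤ n + 1 → M.sem c ≠ none → M.sem c = M'.sem c)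
    {t : Trace I O} (ht : t.2.length ≤ n) {q : Q} {q' : Q'}
    (hq : M.dstar t = some q) (hq' : M'.dstar t = some q') : M.outDist q = M'.outDist q' := by
  funext i
  have := h (traceInput t i) (by rw [length_traceInput]; omega)
    (by simp [sem_traceInput, hq])
  simpa [sem_traceInput, hq, hq'] using this

end DetMDP

/-- Let `M` be a deterministic labelled MDP with `n_q` states and
`M'` one with at most `n_q` states.  Then `M` and `M'` are output-distribution
equivalent iff they agree on all observable test sequences of length at most
`n_q² + 1`. -/
theorem equivalence_iff_bounded_observable_tests {Q Q' I O : Type*}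
    [Fintype Q] [Fintype Q'] (M : DetMDP Q I O) (M' : DetMDP Q' I O)
    (hcard : Fintype.card Q' ≤ Fintype.card Q) :
    (∀ s : TS I O, M.sem s = M'.sem s) ↔
      (∀ c : TS I O, c.length ≤ Fintype.card Q ^ 2 + 1 → M.sem c ≠ none →
        M.sem c = M'.sem c) := by
  refine ⟨fun h c _ _ => h c, fun h => ?_⟩
  have hlab := DetMDP.lab_q0_eq_of_sem_nil_eq (h [] (by simp) (by simp [DetMDP.sem]))
  have hpairs : Fintype.card Q * Fintype.card Q' ≤ Fintype.card Q ^ 2 := by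
    rw [sq]; exact Nat.mul_le_mul_left _ hcard
  have hreach : ∀ l q q', M.run (some M.q0) l = some q → M'.run (some M'.q0) l = some q' →
      M.outDist q = M'.outDist q' := by
    intro l q q' hq hq'
    obtain ⟨l', hl', hq, hq'⟩ := DetMDP.exists_run_eq_some_length_lt M M' l hq hq'
    refine DetMDP.outDist_eq_of_sem_eq_of_length_le h (t := (M.lab M.q0, l'))
      (by simp only; omega) ?_ ?_
    · rwa [DetMDP.dstar_lab_q0]
    · rwa [hlab, DetMDP.dstar_lab_q0]
  exact DetMDP.sem_eq_of_run_map_outDist_eq hlab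
    (DetMDP.map_outDist_run_eq_of_outDist_eq hreach)
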